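/- arXiv:2410.11787 — 2 statements merged into one kernel-verified Lean document; each statement's English description precedes it below -/
import Mathlib

section
/- Let p, q : ℕ → ℕ be sequences such that p(n+1) − p(n) → +∞ and q(n+1) − q(n) → +∞ as n → ∞. Then there exist a probability space (X, μ), invertible measure-preserving transformations S, T of (X, μ), a measurable set C ⊆ X with 0 < μ(C) < 1, and strictly increasing sequences (N_k), (M_k) of positive integers tending to infinity, such that (1/N_k) · Σ_{n=1}^{N_k} μ(S^{p(n)} C ∩ T^{q(n)} C) → μ(C) and (1/M_k) · Σ_{n=1}^{M_k} μ(S^{p(n)} C ∩ T^{q(n)} C) → μ(C)² as k → ∞. In particular, since μ(C) ≠ μ(C)², the full sequence of averages diverges. -/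
/-!
Take the Bernoulli shift on `Bool ^ (ℤ ⊕ ℤ)` and the cylinder `C = {x | x a = true}`. For the
coordinate permutations `S`, `T` induced by permutations `σ`, `τ` of `ℤ ⊕ ℤ`, independence of
the coordinates gives `μ (S^j C ∩ T^k C) = μ C` if `σ^j a = τ^k a` and `μ C ^ 2` otherwise.
Since `p` and `q` are eventually injective, `σ` and `τ` can be chosen so that
`σ^(p n) a = τ^(q n) a` holds, for large `n`, exactly when `n` lies in a prescribed set `E`.
For `E` the union of the blocks `((2k)!, (2k+1)!]`, each block and each gap is much longer than
everything before it, so the averages tend to `μ C` along `(2k+1)!` and to `μ C ^ 2` along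
`(2k+2)!`.
-/

open MeasureTheory Filter Topology Function

theorem Function.Injective.injective_extend {α β γ : Type*} {f : α → β} {g : α → γ}
    {e' : β → γ} (hf : Injective f) (hg : Injective g) (he' : Injective e')
    (hge : ∀ a b, b ∉ Set.range f → g a ≠ e' b) : Injective (extend f g e') := by
  intro b b' h
  by_cases hb : b ∈ Set.range f <;> by_cases hb' : b' ∈ Set.range f
  · obtain ⟨a, rfl⟩ := hb
    obtain ⟨a', rfl⟩ := hb'
    rw [hf.extend_apply, hf.extend_apply] at h
    rw [hg h]
  · obtain ⟨a, rfl⟩ := hb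
    rw [hf.extend_apply, extend_apply' _ _ _ hb'] at h
    exact absurd h (hge a b' hb')
  · obtain ⟨a', rfl⟩ := hb'
    rw [hf.extend_apply, extend_apply' _ _ _ hb] at h
    exact absurd h.symm (hge a' b hb)
  · rw [extend_apply' _ _ _ hb, extend_apply' _ _ _ hb'] at h
    exact he' h

namespace DivergentAverages

section CoordinatePermutation

variable {ι Ω : Type*} [MeasurableSpace Ω]

def permCoords (π : Equiv.Perm ι) : (ι → Ω) ≃ᵐ (ι → Ω) :=
  MeasurableEquiv.piCongrLeft (fun _ => Ω) π

lemma permCoords_symm_apply (π : Equiv.Perm ι) (x : ι → Ω) (i : ι) :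
    (permCoords π).symm x i = x (π i) := by
  simp [permCoords, MeasurableEquiv.piCongrLeft, Equiv.piCongrLeft_symm_apply]

lemma image_permCoords_preimage_eval (π : Equiv.Perm ι) (i : ι) (B : Set Ω) :
    permCoords π '' (eval i ⁻¹' B) = eval (π i) ⁻¹' B := by
  ext x
  simp [MeasurableEquiv.image_eq_preimage_symm, permCoords_symm_apply]

lemma iterate_image_permCoords_preimage_eval (π : Equiv.Perm ι) (k : ℕ) (i : ι) (B : Set Ω) :
    (⇑(permCoords π))^[k] '' (eval i ⁻¹' B) = eval ((⇑π)^[k] i) ⁻¹' B := by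
  have h : Semiconj (fun i => eval i ⁻¹' B) π (Set.image (permCoords π)) := fun i =>
    (image_permCoords_preimage_eval π i B).symm
  rw [Set.image_iterate_eq]
  exact ((h.iterate_right k) i).symm

variable (ν : Measure Ω) [IsProbabilityMeasure ν]

lemma measurePreserving_permCoords (π : Equiv.Perm ι) :
    MeasurePreserving (permCoords π) (Measure.infinitePi fun _ => ν)
      (Measure.infinitePi fun _ => ν) :=
  ⟨(permCoords π).measurable, Measure.infinitePi_map_piCongrLeft (fun _ => ν) π⟩

lemma infinitePi_preimage_eval (i : ι) {B : Set Ω} (hB : MeasurableSet B) :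
    Measure.infinitePi (fun _ => ν) (eval i ⁻¹' B) = ν B :=
  (measurePreserving_eval_infinitePi (fun _ => ν) i).measure_preimage hB.nullMeasurableSet

lemma infinitePi_preimage_eval_inter {i j : ι} (hij : i ≠ j) {B : Set Ω} (hB : MeasurableSet B) :
    Measure.infinitePi (fun _ => ν) (eval i ⁻¹' B ∩ eval j ⁻¹' B) = ν B ^ 2 := by
  classical
  have : eval i ⁻¹' B ∩ eval j ⁻¹' B = Set.pi (({i, j} : Finset ι) : Set ι) fun _ => B := by
    ext x; simp
  rw [this, Measure.infinitePi_pi _ fun _ _ => hB, Finset.prod_pair hij, sq]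

lemma infinitePi_iterate_image_inter [DecidableEq ι] (σ τ : Equiv.Perm ι) (i : ι) {B : Set Ω}
    (hB : MeasurableSet B) (j k : ℕ) :
    Measure.infinitePi (fun _ => ν)
        ((⇑(permCoords σ))^[j] '' (eval i ⁻¹' B) ∩ (⇑(permCoords τ))^[k] '' (eval i ⁻¹' B)) =
      if (⇑σ)^[j] i = (⇑τ)^[k] i then ν B else ν B ^ 2 := by
  rw [iterate_image_permCoords_preimage_eval, iterate_image_permCoords_preimage_eval]
  split_ifs with h
  · rw [h, Set.inter_self, infinitePi_preimage_eval ν _ hB]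
  · exact infinitePi_preimage_eval_inter ν h hB

lemma infinitePi_iterate_image_inter_eventuallyEq [DecidableEq ι] (σ τ : Equiv.Perm ι) (i : ι)
    {B : Set Ω} (hB : MeasurableSet B) {p q : ℕ → ℕ} {E : Set ℕ} [DecidablePred (· ∈ E)]
    (hE : ∀ᶠ n in atTop, (⇑σ)^[p n] i = (⇑τ)^[q n] i ↔ n ∈ E) :
    (fun n => (Measure.infinitePi (fun _ => ν) ((⇑(permCoords σ))^[p n] '' (eval i ⁻¹' B) ∩
        (⇑(permCoords τ))^[q n] '' (eval i ⁻¹' B))).toReal) =ᶠ[atTop]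
      fun n => if n ∈ E then (ν B).toReal else (ν B).toReal ^ 2 := by
  filter_upwards [hE] with n hn
  rw [infinitePi_iterate_image_inter ν σ τ i hB, apply_ite ENNReal.toReal, ENNReal.toReal_pow]
  exact if_congr hn rfl rfl

end CoordinatePermutation

section ShiftAlong

variable {α : Type*} {u : ℤ → α}

open scoped Classical in
noncomputable def shiftAlong (hu : Injective u) : Equiv.Perm α :=
  (Equiv.addRight (1 : ℤ)).extendDomain (Equiv.ofInjective u hu)

lemma shiftAlong_apply (hu : Injective u) (m : ℤ) : shiftAlong hu (u m) = u (m + 1) := by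
  classical
  simpa [shiftAlong] using
    Equiv.Perm.extendDomain_apply_image (Equiv.addRight (1 : ℤ)) (Equiv.ofInjective u hu) m

lemma iterate_shiftAlong_apply (hu : Injective u) (k : ℕ) (m : ℤ) :
    (⇑(shiftAlong hu))^[k] (u m) = u (m + k) := by
  induction k with
  | zero => simp
  | succ k ih =>
    rw [iterate_succ_apply', ih, shiftAlong_apply]
    push_cast
    ring_nf

end ShiftAlong

lemma exists_injective_apply_eq_inl_iff {p q : ℕ → ℕ} {A : Set ℕ} (hp : Set.InjOn p A)
    (hq : Set.InjOn q A) (hp0 : ∀ n ∈ A, p n ≠ 0) (hq0 : ∀ n ∈ A, q n ≠ 0) (E : Set ℕ) :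
    ∃ u : ℤ → ℤ ⊕ ℤ, Injective u ∧ u 0 = Sum.inl 0 ∧
      ∀ n ∈ A, u (q n) = Sum.inl (p n : ℤ) ↔ n ∈ E := by
  let F := E ∩ A
  let f : F → ℤ := fun n => q n
  have hf : Injective f := fun m n h =>
    Subtype.ext (hq m.2.2 n.2.2 (Nat.cast_injective h))
  let u : ℤ → ℤ ⊕ ℤ := extend f (fun n => Sum.inl (p n : ℤ))
    (fun b => if b = 0 then Sum.inl 0 else Sum.inr b)
  have hu_not : ∀ b : ℤ, b ∉ Set.range f → u b = if b = 0 then Sum.inl 0 else Sum.inr b :=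
    fun b hb => extend_apply' _ _ _ hb
  have hzero : (0 : ℤ) ∉ Set.range f := by
    rintro ⟨n, hn⟩
    exact hq0 n n.2.2 (Int.natCast_eq_zero.mp hn)
  refine ⟨u, ?_, by rw [hu_not 0 hzero, if_pos rfl], fun n hn => ⟨fun h => ?_, fun hnE => ?_⟩⟩
  · refine hf.injective_extend (fun m n h => Subtype.ext (hp m.2.2 n.2.2 ?_)) ?_ ?_
    · exact_mod_cast Sum.inl_injective h
    · intro b b' h
      dsimp only at h
      split_ifs at h with hb hb' hb' <;> simp_all
    · intro n b _ h
      split_ifs at h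
      exact hp0 n n.2.2 (by exact_mod_cast Sum.inl_injective h)
  · by_contra hnE
    have hqn : (q n : ℤ) ∉ Set.range f := by
      rintro ⟨m, hm⟩
      exact hnE (hq m.2.2 hn (Nat.cast_injective hm) ▸ m.2.1)
    rw [hu_not _ hqn, if_neg (by exact_mod_cast hq0 n hn)] at h
    exact Sum.inr_ne_inl h
  · exact hf.extend_apply _ _ ⟨n, hnE, hn⟩

lemma exists_perm_iterate_eq_iff {p q : ℕ → ℕ} {A : Set ℕ} (hp : Set.InjOn p A)
    (hq : Set.InjOn q A) (hp0 : ∀ n ∈ A, p n ≠ 0) (hq0 : ∀ n ∈ A, q n ≠ 0) (E : Set ℕ) :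
    ∃ σ τ : Equiv.Perm (ℤ ⊕ ℤ), ∀ n ∈ A,
      (⇑σ)^[p n] (Sum.inl 0) = (⇑τ)^[q n] (Sum.inl 0) ↔ n ∈ E := by
  obtain ⟨u, hu, hu0, huE⟩ := exists_injective_apply_eq_inl_iff hp hq hp0 hq0 E
  refine ⟨shiftAlong Sum.inl_injective, shiftAlong hu, fun n hn => ?_⟩
  rw [← hu0, iterate_shiftAlong_apply, hu0, iterate_shiftAlong_apply Sum.inl_injective, zero_add,
    zero_add, eq_comm, huE n hn]

lemma eventually_strictMonoOn_Ici {p : ℕ → ℕ}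
    (hp : Tendsto (fun n => (p (n + 1) : ℤ) - (p n : ℤ)) atTop atTop) :
    ∀ᶠ n₀ in atTop, StrictMonoOn p (Set.Ici n₀) := by
  obtain ⟨n₁, hn₁⟩ := eventually_atTop.1 (hp.eventually_ge_atTop 1)
  refine eventually_atTop.2 ⟨n₁, fun n₀ hn₀ => ?_⟩
  refine strictMonoOn_of_lt_succ Set.ordConnected_Ici fun n _ hn _ => ?_
  have := hn₁ n (hn₀.trans hn)
  rw [Order.succ_eq_add_one]
  omega

section Cesaro

noncomputable def cesaroAverage (f : ℕ → ℝ) (N : ℕ) : ℝ :=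
  (1 / (N : ℝ)) * ∑ n ∈ Finset.Icc 1 N, f n

variable {f g : ℕ → ℝ}

lemma Icc_one_eq_Ioc_zero (N : ℕ) : Finset.Icc 1 N = Finset.Ioc 0 N := by
  simpa using Finset.Icc_add_one_left_eq_Ioc 0 N

lemma tendsto_cesaroAverage_sub_of_eventuallyEq (hfg : f =ᶠ[atTop] g) :
    Tendsto (fun N => cesaroAverage f N - cesaroAverage g N) atTop (𝓝 0) := by
  obtain ⟨n₀, hn₀⟩ := eventually_atTop.1 hfg
  refine (tendsto_const_div_atTop_nhds_zero_nat (∑ n ∈ Finset.Icc 1 n₀, (f n - g n))).congr'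
    (eventually_atTop.2 ⟨n₀, fun N hN => ?_⟩)
  have htail : ∑ n ∈ Finset.Ioc n₀ N, (f n - g n) = 0 :=
    Finset.sum_eq_zero fun n hn => by rw [hn₀ n (Finset.mem_Ioc.1 hn).1.le, sub_self]
  simp only [cesaroAverage]
  rw [← mul_sub, ← Finset.sum_sub_distrib, Icc_one_eq_Ioc_zero, Icc_one_eq_Ioc_zero,
    ← Finset.sum_Ioc_consecutive _ (Nat.zero_le n₀) hN, htail, add_zero, one_div_mul_eq_div]

lemma tendsto_cesaroAverage_comp_of_eventuallyEq {N : ℕ → ℕ} {l : ℝ} (hfg : f =ᶠ[atTop] g)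
    (hN : Tendsto N atTop atTop) (hg : Tendsto (fun k => cesaroAverage g (N k)) atTop (𝓝 l)) :
    Tendsto (fun k => cesaroAverage f (N k)) atTop (𝓝 l) := by
  simpa using hg.add ((tendsto_cesaroAverage_sub_of_eventuallyEq hfg).comp hN)

lemma cesaroAverage_ite {N : ℕ} (hN : N ≠ 0) (E : Set ℕ) [DecidablePred (· ∈ E)] (a b : ℝ) :
    cesaroAverage (fun n => if n ∈ E then a else b) N =
      b + (a - b) * cesaroAverage (E.indicator 1) N := by
  have hite : ∀ n, (if n ∈ E then a else b) = b + (a - b) * E.indicator 1 n := by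
    intro n
    by_cases hn : n ∈ E <;> simp [hn]
  simp only [cesaroAverage, hite, Finset.sum_add_distrib, Finset.sum_const, Nat.card_Icc,
    ← Finset.mul_sum, nsmul_eq_mul, Nat.add_sub_cancel]
  field_simp

lemma cesaroAverage_nonneg (hf : 0 ≤ f) (N : ℕ) : 0 ≤ cesaroAverage f N :=
  mul_nonneg (by positivity) (Finset.sum_nonneg fun n _ => hf n)

variable {E : Set ℕ} {a N : ℕ}

lemma one_sub_div_le_cesaroAverage_indicator (hN : 0 < N) (haN : a ≤ N)
    (hE : Set.Ioc a N ⊆ E) : 1 - (a : ℝ) / N ≤ cesaroAverage (E.indicator 1) N := by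
  have hcount : ((N - a : ℕ) : ℝ) ≤ ∑ n ∈ Finset.Icc 1 N, E.indicator 1 n :=
    calc ((N - a : ℕ) : ℝ) = ∑ n ∈ Finset.Ioc a N, E.indicator (1 : ℕ → ℝ) n := by
          rw [Finset.sum_congr rfl fun n hn => Set.indicator_of_mem (hE (by simpa using hn)) _]
          simp
      _ ≤ ∑ n ∈ Finset.Icc 1 N, E.indicator 1 n := by
          refine Finset.sum_le_sum_of_subset_of_nonneg ?_ fun n _ _ => Set.indicator_nonneg
            (fun _ _ => zero_le_one) n
          intro n hn
          simp only [Finset.mem_Ioc, Finset.mem_Icc] at hn ⊢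
          omega
  rw [Nat.cast_sub haN] at hcount
  rw [cesaroAverage, one_sub_div (by positivity), one_div_mul_eq_div]
  exact div_le_div_of_nonneg_right hcount (Nat.cast_nonneg N)

lemma cesaroAverage_indicator_le_div (haN : a ≤ N) (hE : ∀ n ∈ Set.Ioc a N, n ∉ E) :
    cesaroAverage (E.indicator 1) N ≤ (a : ℝ) / N := by
  have hcount : ∑ n ∈ Finset.Icc 1 N, E.indicator (1 : ℕ → ℝ) n ≤ a :=
    calc ∑ n ∈ Finset.Icc 1 N, E.indicator (1 : ℕ → ℝ) n
        = ∑ n ∈ Finset.Ioc 0 a, E.indicator (1 : ℕ → ℝ) n := by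
          rw [Icc_one_eq_Ioc_zero, ← Finset.sum_Ioc_consecutive _ (Nat.zero_le a) haN,
            Finset.sum_eq_zero (s := Finset.Ioc a N)
              fun n hn => Set.indicator_of_notMem (hE n (by simpa using hn)) _, add_zero]
      _ ≤ ∑ n ∈ Finset.Ioc 0 a, (1 : ℝ) :=
          Finset.sum_le_sum fun n _ => Set.indicator_le_self' (fun _ _ => zero_le_one) n
      _ = a := by simp
  rw [cesaroAverage, one_div_mul_eq_div]
  exact div_le_div_of_nonneg_right hcount (Nat.cast_nonneg N)

end Cesaro

section FactorialBlocks

open Nat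

def factorialBlocks : Set ℕ := {n | ∃ k, (2 * k)! < n ∧ n ≤ (2 * k + 1)!}

lemma notMem_factorialBlocks {k n : ℕ} (hn : n ∈ Set.Ioc (2 * k + 1)! (2 * k + 2)!) :
    n ∉ factorialBlocks := by
  rintro ⟨j, hj₁, hj₂⟩
  obtain hjk | hkj := le_or_gt j k
  · have := factorial_le (show 2 * j + 1 ≤ 2 * k + 1 by omega)
    exact absurd hn.1 (by omega)
  · have := factorial_le (show 2 * k + 2 ≤ 2 * j by omega)
    exact absurd hn.2 (by omega)

lemma tendsto_factorial_div_factorial_succ :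
    Tendsto (fun j : ℕ => (j ! : ℝ) / (j + 1)!) atTop (𝓝 0) := by
  have h : ∀ j : ℕ, (j ! : ℝ) / (j + 1)! = 1 / ((j : ℝ) + 1) := by
    intro j
    rw [factorial_succ]
    push_cast
    field_simp
  simpa only [h] using tendsto_one_div_add_atTop_nhds_zero_nat

lemma tendsto_cesaroAverage_factorialBlocks_odd :
    Tendsto (fun k => cesaroAverage (factorialBlocks.indicator 1) (2 * k + 1)!) atTop (𝓝 1) := by
  have h2k : Tendsto (fun k : ℕ => 2 * k) atTop atTop :=
    StrictMono.tendsto_atTop fun a b hab => by omega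
  have hlow := (tendsto_factorial_div_factorial_succ.comp h2k).const_sub 1
  rw [sub_zero] at hlow
  refine tendsto_of_tendsto_of_tendsto_of_le_of_le hlow tendsto_const_nhds (fun k => ?_)
    fun k => ?_
  · exact one_sub_div_le_cesaroAverage_indicator (factorial_pos _)
      (factorial_le (by omega)) fun n hn => ⟨k, hn⟩
  · refine (cesaroAverage_indicator_le_div le_rfl fun n hn => absurd hn ?_).trans
      (div_self_le_one _)
    simp

lemma tendsto_cesaroAverage_factorialBlocks_even :
    Tendsto (fun k => cesaroAverage (factorialBlocks.indicator 1) (2 * k + 2)!) atTop (𝓝 0) := by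
  have h2k : Tendsto (fun k : ℕ => 2 * k + 1) atTop atTop :=
    StrictMono.tendsto_atTop fun a b hab => by omega
  refine tendsto_of_tendsto_of_tendsto_of_le_of_le tendsto_const_nhds
    (tendsto_factorial_div_factorial_succ.comp h2k) (fun k => ?_) fun k => ?_
  · exact cesaroAverage_nonneg (Set.indicator_nonneg fun _ _ => zero_le_one) _
  · exact cesaroAverage_indicator_le_div (factorial_le (show 2 * k + 1 ≤ 2 * k + 2 by omega))
      fun n hn => notMem_factorialBlocks hn

variable [DecidablePred (· ∈ factorialBlocks)] (a b : ℝ)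

lemma tendsto_cesaroAverage_ite_factorialBlocks_odd :
    Tendsto (fun k => cesaroAverage (fun n => if n ∈ factorialBlocks then a else b)
      (2 * k + 1)!) atTop (𝓝 a) := by
  simp only [cesaroAverage_ite (factorial_ne_zero _)]
  simpa using (tendsto_cesaroAverage_factorialBlocks_odd.const_mul (a - b)).const_add b

lemma tendsto_cesaroAverage_ite_factorialBlocks_even :
    Tendsto (fun k => cesaroAverage (fun n => if n ∈ factorialBlocks then a else b)
      (2 * k + 2)!) atTop (𝓝 b) := by
  simp only [cesaroAverage_ite (factorial_ne_zero _)]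
  simpa using (tendsto_cesaroAverage_factorialBlocks_even.const_mul (a - b)).const_add b

end FactorialBlocks

lemma not_exists_tendsto_of_tendsto_comp {β : Type*} [TopologicalSpace β] [T2Space β]
    {u : ℕ → β} {N M : ℕ → ℕ} {a b : β} (hN : Tendsto N atTop atTop)
    (hM : Tendsto M atTop atTop) (ha : Tendsto (u ∘ N) atTop (𝓝 a))
    (hb : Tendsto (u ∘ M) atTop (𝓝 b)) (hab : a ≠ b) : ¬∃ l, Tendsto u atTop (𝓝 l) := by
  rintro ⟨l, hl⟩
  exact hab ((tendsto_nhds_unique ha (hl.comp hN)).trans (tendsto_nhds_unique (hl.comp hM) hb))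

end DivergentAverages

open DivergentAverages Nat

/-- Refined form of Theorem 1: there are two subsequential limits of the averages,
namely `μ(C)` along `(N_k)` and `μ(C)²` along `(M_k)`; in particular the averages diverge. -/
theorem divergent_averages_two_limits (p q : ℕ → ℕ)
    (hp : Tendsto (fun n => (p (n + 1) : ℤ) - (p n : ℤ)) atTop atTop)
    (hq : Tendsto (fun n => (q (n + 1) : ℤ) - (q n : ℤ)) atTop atTop) :
    ∃ (X : Type) (_ : MeasurableSpace X) (μ : Measure X), IsProbabilityMeasure μ ∧
      ∃ (S T : X ≃ᵐ X), MeasurePreserving S μ μ ∧ MeasurePreserving T μ μ ∧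
        ∃ C : Set X, MeasurableSet C ∧ 0 < μ C ∧ μ C < 1 ∧
          ∃ N M : ℕ → ℕ, StrictMono N ∧ StrictMono M ∧
            (∀ k, 0 < N k) ∧ (∀ k, 0 < M k) ∧
            Tendsto N atTop atTop ∧ Tendsto M atTop atTop ∧
            Tendsto
              (fun k : ℕ => (1 / (N k : ℝ)) *
                ∑ n ∈ Finset.Icc 1 (N k),
                  (μ ((⇑S)^[p n] '' C ∩ (⇑T)^[q n] '' C)).toReal)
              atTop (𝓝 ((μ C).toReal)) ∧
            Tendsto
              (fun k : ℕ => (1 / (M k : ℝ)) *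
                ∑ n ∈ Finset.Icc 1 (M k),
                  (μ ((⇑S)^[p n] '' C ∩ (⇑T)^[q n] '' C)).toReal)
              atTop (𝓝 ((μ C).toReal ^ 2)) ∧
            ¬ ∃ l : ℝ, Tendsto
              (fun N' : ℕ => (1 / (N' : ℝ)) *
                ∑ n ∈ Finset.Icc 1 N',
                  (μ ((⇑S)^[p n] '' C ∩ (⇑T)^[q n] '' C)).toReal)
              atTop (𝓝 l) := by
  classical
  obtain ⟨n₀, hp_mono, hq_mono⟩ :=
    ((eventually_strictMonoOn_Ici hp).and (eventually_strictMonoOn_Ici hq)).exists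
  have hne : ∀ {r : ℕ → ℕ}, StrictMonoOn r (Set.Ici n₀) → ∀ n ∈ Set.Ioi n₀, r n ≠ 0 :=
    fun hr n hn => Nat.ne_zero_of_lt (hr Set.self_mem_Ici (Set.mem_Ici.2 hn.le) hn)
  obtain ⟨σ, τ, hστ⟩ := exists_perm_iterate_eq_iff (hp_mono.injOn.mono Set.Ioi_subset_Ici_self)
    (hq_mono.injOn.mono Set.Ioi_subset_Ici_self) (hne hp_mono) (hne hq_mono) factorialBlocks
  let ν := (PMF.uniformOfFintype Bool).toMeasure
  have hB : MeasurableSet {true} := measurableSet_singleton true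
  have hνB : ν {true} = 2⁻¹ := by simp [ν]
  have hμC := infinitePi_preimage_eval (ι := ℤ ⊕ ℤ) ν (Sum.inl 0) hB
  have hcorr := infinitePi_iterate_image_inter_eventuallyEq ν σ τ (Sum.inl 0) hB
    ((eventually_gt_atTop n₀).mono hστ)
  have hN : StrictMono fun k => (2 * k + 1)! := fun a b h => (factorial_lt (by omega)).2 (by omega)
  have hM : StrictMono fun k => (2 * k + 2)! := fun a b h => (factorial_lt (by omega)).2 (by omega)
  have hlimN := tendsto_cesaroAverage_comp_of_eventuallyEq hcorr hN.tendsto_atTop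
    (tendsto_cesaroAverage_ite_factorialBlocks_odd _ _)
  have hlimM := tendsto_cesaroAverage_comp_of_eventuallyEq hcorr hM.tendsto_atTop
    (tendsto_cesaroAverage_ite_factorialBlocks_even _ _)
  refine ⟨_, _, Measure.infinitePi fun _ : ℤ ⊕ ℤ => ν, inferInstance, permCoords σ, permCoords τ,
    measurePreserving_permCoords ν σ, measurePreserving_permCoords ν τ,
    eval (Sum.inl 0) ⁻¹' {true}, measurable_pi_apply _ hB, ?_, ?_, _, _, hN, hM,
    fun k => factorial_pos _, fun k => factorial_pos _, hN.tendsto_atTop, hM.tendsto_atTop, ?_, ?_, ?_⟩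
  · simp [hμC, hνB]
  · simp [hμC, hνB]
  · rwa [hμC]
  · rwa [hμC]
  · refine not_exists_tendsto_of_tendsto_comp hN.tendsto_atTop hM.tendsto_atTop hlimN hlimM ?_
    norm_num [hνB]
end

section
/- Let (X, μ) be a probability space, let S and T be invertible measure-preserving transformations of (X, μ), and let D ⊆ X be measurable with μ(D) > 0 and Σ_{n=1}^{∞} μ(S^n D ∩ T^n D)^4 < ∞. Consider the product probability space (X⁴, μ^{⊗4}) with the product transformations S₄ = S × S × S × S and T₄ = T × T × T × T, and the set D₄ = D × D × D × D. Then there exist an integer p ≥ 1 and a measurable set D' ⊆ D₄ with μ^{⊗4}(D') > 0 such that (S₄)^{p·n} D' ∩ (T₄)^{p·n} D' = ∅ for every n ≥ 1. -/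
/-!
Since `S₄` preserves `μ^{⊗4}`, the set of points `x ∈ D₄` with `S₄^{pn} x ∈ S₄^{pn} D₄ ∩ T₄^{pn} D₄`
for some `n ≥ 1` has measure at most `Σ_{n≥1} μ(S^{pn} D ∩ T^{pn} D)^4 ≤ Σ_{m≥p} μ(S^m D ∩ T^m D)^4`.
For `p` large this tail is below `μ(D)^4 = μ^{⊗4}(D₄)`, so removing those points from `D₄` leaves a
set `D'` of positive measure, and `S₄^{pn} D' ∩ T₄^{pn} D' = ∅` for all `n ≥ 1`.
-/

open MeasureTheory Set

theorem MeasurableEmbedding.iterate {α : Type*} [MeasurableSpace α] {f : α → α}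
    (hf : MeasurableEmbedding f) : ∀ n, MeasurableEmbedding f^[n]
  | 0 => .id
  | n + 1 => (hf.iterate n).comp hf

theorem Set.image_iterate_piMap_inter_image_iterate_piMap {ι : Type*} {α : ι → Type*}
    (f g : ∀ i, α i → α i) (D : ∀ i, Set (α i)) (m : ℕ) :
    (Pi.map f)^[m] '' univ.pi D ∩ (Pi.map g)^[m] '' univ.pi D =
      univ.pi fun i => (f i)^[m] '' D i ∩ (g i)^[m] '' D i := by
  rw [Pi.map_iterate, Pi.map_iterate, piMap_image_univ_pi, piMap_image_univ_pi, pi_inter_distrib]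

namespace ENNReal

theorem tsum_mul_succ_le_tsum_add (a : ℕ → ℝ≥0∞) {p : ℕ} (hp : 0 < p) :
    ∑' n, a (p * (n + 1)) ≤ ∑' k, a (k + p) := by
  have hinj : Function.Injective (p * ·) := fun _ _ h => Nat.eq_of_mul_eq_mul_left hp h
  simpa only [mul_add, mul_one] using tsum_comp_le_tsum_of_injective hinj (fun k => a (k + p))

theorem exists_tsum_mul_succ_lt {a : ℕ → ℝ≥0∞} (ha : ∑' n, a (n + 1) ≠ ∞) {ε : ℝ≥0∞}
    (hε : 0 < ε) : ∃ p, 1 ≤ p ∧ ∑' n, a (p * (n + 1)) < ε := by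
  obtain ⟨N, hN⟩ := ((tendsto_sum_nat_add _ ha).eventually_lt_const hε).exists
  refine ⟨N + 1, Nat.le_add_left 1 N, (tsum_mul_succ_le_tsum_add a N.succ_pos).trans_lt ?_⟩
  simpa only [add_assoc] using hN

end ENNReal

theorem MeasureTheory.MeasurePreserving.exists_subset_image_iterate_inter_eq_empty {α : Type*}
    [MeasurableSpace α] {ν : Measure α} {f : α → α} (hf : MeasurePreserving f ν ν) (g : α → α)
    {A : Set α} (hA : MeasurableSet A) (t : ℕ → ℕ)
    (hmeas : ∀ n, MeasurableSet (f^[t n] '' A ∩ g^[t n] '' A))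
    (hsum : ∑' n, ν (f^[t n] '' A ∩ g^[t n] '' A) < ν A) :
    ∃ A' ⊆ A, MeasurableSet A' ∧ 0 < ν A' ∧ ∀ n, f^[t n] '' A' ∩ g^[t n] '' A' = ∅ := by
  set U := ⋃ n, f^[t n] ⁻¹' (f^[t n] '' A ∩ g^[t n] '' A)
  have hU : MeasurableSet U := .iUnion fun n => (hf.iterate (t n)).measurable (hmeas n)
  have hνU : ν U < ν A :=
    calc ν U ≤ ∑' n, ν (f^[t n] ⁻¹' (f^[t n] '' A ∩ g^[t n] '' A)) := measure_iUnion_le _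
      _ = ∑' n, ν (f^[t n] '' A ∩ g^[t n] '' A) := by
        simp only [fun n => (hf.iterate (t n)).measure_preimage (hmeas n).nullMeasurableSet]
      _ < ν A := hsum
  refine ⟨A \ U, sdiff_subset, hA.diff hU, (tsub_pos_of_lt hνU).trans_le le_measure_sdiff, ?_⟩
  refine fun n => eq_empty_of_forall_notMem ?_
  rintro _ ⟨⟨y, ⟨hyA, hyU⟩, rfl⟩, z, ⟨hzA, -⟩, hz⟩
  exact hyU (mem_iUnion.2 ⟨n, mem_image_of_mem _ hyA, hz ▸ mem_image_of_mem _ hzA⟩)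

theorem product_power_nonrecurrence_general {X : Type*} [MeasurableSpace X] (μ : Measure X)
    [IsProbabilityMeasure μ] (S T : X ≃ᵐ X)
    (hS : MeasurePreserving S μ μ)
    (D : Set X) (hD : MeasurableSet D) (hDpos : 0 < μ D)
    (hsum : ∑' n : ℕ, (μ ((⇑S)^[n + 1] '' D ∩ (⇑T)^[n + 1] '' D)) ^ 4 < ⊤) :
    ∃ p : ℕ, 1 ≤ p ∧
      ∃ D' : Set (Fin 4 → X), D' ⊆ Set.univ.pi (fun _ => D) ∧ MeasurableSet D' ∧
        0 < Measure.pi (fun _ : Fin 4 => μ) D' ∧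
        ∀ n : ℕ, 1 ≤ n →
          (fun x : Fin 4 → X => fun i => S (x i))^[p * n] '' D' ∩
            (fun x : Fin 4 → X => fun i => T (x i))^[p * n] '' D' = ∅ := by
  have hinter := image_iterate_piMap_inter_image_iterate_piMap (fun _ : Fin 4 => ⇑S)
    (fun _ => ⇑T) (fun _ => D)
  have hS₄ : MeasurePreserving (Pi.map fun _ : Fin 4 => ⇑S) (.pi fun _ => μ) (.pi fun _ => μ) :=
    measurePreserving_pi _ _ fun _ => hS
  have hmeas : ∀ m, MeasurableSet ((⇑S)^[m] '' D ∩ (⇑T)^[m] '' D) := fun m =>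
    ((S.measurableEmbedding.iterate m).measurableSet_image' hD).inter
      ((T.measurableEmbedding.iterate m).measurableSet_image' hD)
  obtain ⟨p, hp, hsmall⟩ := ENNReal.exists_tsum_mul_succ_lt
    (a := fun m => μ ((⇑S)^[m] '' D ∩ (⇑T)^[m] '' D) ^ 4) hsum.ne (ENNReal.pow_pos hDpos 4)
  obtain ⟨D', hD'D, hD', hD'pos, hempty⟩ :=
    hS₄.exists_subset_image_iterate_inter_eq_empty (Pi.map fun _ => ⇑T)
      (.univ_pi fun _ => hD) (fun n => p * (n + 1))
      (fun n => hinter _ ▸ .univ_pi fun _ => hmeas _)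
      (by simpa only [hinter, Measure.pi_pi, Finset.prod_const, Finset.card_univ, Fintype.card_fin]
        using hsmall)
  refine ⟨p, hp, D', hD'D, hD', hD'pos, fun n hn => ?_⟩
  obtain ⟨k, rfl⟩ := Nat.exists_eq_add_of_le' hn
  exact hempty k

/-- If `Σ_{n≥1} μ(S^n D ∩ T^n D)^4 < ∞` and `μ(D) > 0`, then on the 4-fold product space
with the product transformations `S₄ = S×S×S×S`, `T₄ = T×T×T×T` and `D₄ = D×D×D×D`, there
are `p ≥ 1` and a positive-measure subset `D' ⊆ D₄` with `(S₄)^{pn} D' ∩ (T₄)^{pn} D' = ∅`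
for all `n ≥ 1`. -/
theorem product_power_nonrecurrence {X : Type*} [MeasurableSpace X] (μ : Measure X)
    [IsProbabilityMeasure μ] (S T : X ≃ᵐ X)
    (hS : MeasurePreserving S μ μ) (hT : MeasurePreserving T μ μ)
    (D : Set X) (hD : MeasurableSet D) (hDpos : 0 < μ D)
    (hsum : ∑' n : ℕ, (μ ((⇑S)^[n + 1] '' D ∩ (⇑T)^[n + 1] '' D)) ^ 4 < ⊤) :
    ∃ p : ℕ, 1 ≤ p ∧
      ∃ D' : Set (Fin 4 → X), D' ⊆ Set.univ.pi (fun _ => D) ∧ MeasurableSet D' ∧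
        0 < Measure.pi (fun _ : Fin 4 => μ) D' ∧
        ∀ n : ℕ, 1 ≤ n →
          (fun x : Fin 4 → X => fun i => S (x i))^[p * n] '' D' ∩
            (fun x : Fin 4 → X => fun i => T (x i))^[p * n] '' D' = ∅ :=
  product_power_nonrecurrence_general μ S T hS D hD hDpos hsum
end
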